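/- Suppose N consists of coset leaders (each n ∈ N has minimal weight in its coset). If r ∈ F_2^n has coset representative n ∈ N with n ≠ 0, then there exists an index i such that wt(φ(n, e_i)) = wt(n) − 1 and r + e_i lies in the coset of φ(n, e_i); hence the backward step of the (N, φ)-reduction decoding algorithm always makes progress and terminates with a codeword c at distance wt(n) from r. -/

import Mathlib

/-! Pick `i` in the support of `m`, so that `m + eᵢ` has weight `wt m - 1`. The leader `φ m i` of
the coset of `m + eᵢ` weighs at most that much, while `m`, lying in the coset of `φ m i + eᵢ`,
gives `wt m ≤ wt (φ m i) + 1`. The codeword at distance `wt m` from `r` is `r - m`. -/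

section Hamming

variable {ι : Type*} [Fintype ι] {β : ι → Type*} [∀ i, DecidableEq (β i)]

theorem hammingNorm_add_le [∀ i, AddZeroClass (β i)] (x y : ∀ i, β i) :
    hammingNorm (x + y) ≤ hammingNorm x + hammingNorm y := by
  classical
  refine (Finset.card_le_card fun j hj => ?_).trans (Finset.card_union_le _ _)
  contrapose! hj
  simp_all

theorem hammingNorm_single_le [DecidableEq ι] {M : Type*} [Zero M] [DecidableEq M]
    (i : ι) (b : M) : hammingNorm (Pi.single i b : ι → M) ≤ 1 := by
  refine Finset.card_le_one.2 fun j hj k hk => ?_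
  have hsupp : ∀ l, (Pi.single i b : ι → M) l ≠ 0 → l = i := fun l hl =>
    by_contra fun h => hl (by simp [h])
  simp only [Finset.mem_filter, Finset.mem_univ, true_and] at hj hk
  rw [hsupp j hj, hsupp k hk]

theorem hammingNorm_add_single_le [DecidableEq ι] {M : Type*} [AddZeroClass M] [DecidableEq M]
    (x : ι → M) (i : ι) (b : M) : hammingNorm (x + Pi.single i b) ≤ hammingNorm x + 1 :=
  (hammingNorm_add_le x _).trans (Nat.add_le_add_left (hammingNorm_single_le i b) _)

theorem hammingNorm_update_zero_add_one [DecidableEq ι] [∀ i, Zero (β i)] {x : ∀ i, β i} {i : ι}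
    (hx : x i ≠ 0) : hammingNorm (Function.update x i 0) + 1 = hammingNorm x := by
  have hsupp : ({j | Function.update x i 0 j ≠ 0} : Finset ι) =
      ({j | x j ≠ 0} : Finset ι).erase i := by
    ext j
    rcases eq_or_ne j i with rfl | hj <;> simp [*]
  rw [hammingNorm, hsupp, Finset.card_erase_add_one (by simpa using hx), hammingNorm]

end Hamming

section CharTwo

variable {ι : Type*}

theorem ZMod.add_single_one_eq_update_zero [DecidableEq ι] {x : ι → ZMod 2} {i : ι}
    (hx : x i ≠ 0) : x + Pi.single i 1 = Function.update x i 0 := by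
  have hxi : x i = 1 := Fin.eq_one_of_ne_zero (x i) hx
  ext j
  rcases eq_or_ne j i with rfl | hj <;> simp [*, CharTwo.add_self_eq_zero]

theorem CharTwo.add_sub_eq_add_sub_swap {R : Type*} [Ring R] [CharP R 2] (x y z : ι → R) :
    x + y - z = z + y - x := by
  ext j
  simp only [Pi.add_apply, Pi.sub_apply, CharTwo.sub_eq_add]
  abel

end CharTwo

theorem backward_step_progress_general (n : ℕ) (C : Submodule (ZMod 2) (Fin n → ZMod 2))
    (N : Set (Fin n → ZMod 2)) (φ : (Fin n → ZMod 2) → Fin n → (Fin n → ZMod 2))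
    (hlead : ∀ m ∈ N, ∀ v : Fin n → ZMod 2, v - m ∈ C → hammingNorm m ≤ hammingNorm v)
    (hφ : ∀ m ∈ N, ∀ i : Fin n, φ m i ∈ N ∧ (m + Pi.single i 1) - φ m i ∈ C)
    (r m : Fin n → ZMod 2) (hm : m ∈ N) (hrm : r - m ∈ C) (hm0 : m ≠ 0) :
    (∃ i : Fin n, hammingNorm (φ m i) = hammingNorm m - 1 ∧
      (r + Pi.single i 1) - φ m i ∈ C) ∧
    ∃ c ∈ C, hammingDist r c = hammingNorm m := by
  obtain ⟨i, hi⟩ := Function.ne_iff.1 hm0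
  obtain ⟨hφN, hφC⟩ := hφ m hm i
  have hdrop : hammingNorm (m + Pi.single i 1) + 1 = hammingNorm m := by
    rw [ZMod.add_single_one_eq_update_zero hi]
    exact hammingNorm_update_zero_add_one hi
  have hφ_le : hammingNorm (φ m i) ≤ hammingNorm (m + Pi.single i 1) := hlead _ hφN _ hφC
  have hm_le : hammingNorm m ≤ hammingNorm (φ m i) + 1 :=
    (hlead m hm _ (by rwa [CharTwo.add_sub_eq_add_sub_swap])).trans (hammingNorm_add_single_le _ i 1)
  refine ⟨⟨i, by omega, ?_⟩, r - m, hrm, ?_⟩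
  · convert C.add_mem hrm hφC using 1
    abel
  · rw [hammingDist_comm, hammingDist_eq_hammingNorm, neg_add_eq_sub, sub_sub_cancel]

/-- The backward step of the `(N, φ)`-reduction decoding algorithm always makes
progress when the representative is nonzero, and the algorithm terminates with a
codeword at distance `wt(n)` from `r`. -/
theorem backward_step_progress (n : ℕ) (C : Submodule (ZMod 2) (Fin n → ZMod 2))
    (N : Set (Fin n → ZMod 2)) (φ : (Fin n → ZMod 2) → Fin n → (Fin n → ZMod 2))
    (h0 : (0 : Fin n → ZMod 2) ∈ N)
    (htrans : ∀ y : Fin n → ZMod 2, ∃! m, m ∈ N ∧ y - m ∈ C)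
    (hlead : ∀ m ∈ N, ∀ v : Fin n → ZMod 2, v - m ∈ C → hammingNorm m ≤ hammingNorm v)
    (hφ : ∀ m ∈ N, ∀ i : Fin n, φ m i ∈ N ∧ (m + Pi.single i 1) - φ m i ∈ C)
    (r m : Fin n → ZMod 2) (hm : m ∈ N) (hrm : r - m ∈ C) (hm0 : m ≠ 0) :
    (∃ i : Fin n, hammingNorm (φ m i) = hammingNorm m - 1 ∧
      (r + Pi.single i 1) - φ m i ∈ C) ∧
    ∃ c ∈ C, hammingDist r c = hammingNorm m :=
  backward_step_progress_general n C N φ hlead hφ r m hm hrm hm0
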